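/- Let V be a finite set and let D_1, D_2 be DAGs on V with the same skeleton and the same unshielded colliders (i.e., Markov-equivalent DAGs). Then for every collection of finite nonempty sets 𝒳_i (i∈V), every strictly positive pmf p on ∏_{i∈V}𝒳_i, and every configuration v, ∏_{i∈V} p(v_i | v_{Pa_{D_1}(i)}) = ∏_{i∈V} p(v_i | v_{Pa_{D_2}(i)}). -/

import Mathlib

open scoped Classical

/-- A partially directed graph on vertex type `V`: directed edges `dir i j` (i→j) and
undirected edges `undir i j` (i—j), with at most one edge between any two vertices. -/
structure PDG (V : Type) where
  dir : V → V → Prop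
  undir : V → V → Prop
  undir_symm : ∀ i j, undir i j → undir j i
  undir_irrefl : ∀ i, ¬ undir i i
  dir_irrefl : ∀ i, ¬ dir i i
  not_dir_dir : ∀ i j, dir i j → ¬ dir j i
  not_dir_undir : ∀ i j, dir i j → ¬ undir i j

namespace PDG

variable {V : Type}

/-- Adjacency: joined by some edge. -/
def Adj (G : PDG V) (i j : V) : Prop := G.dir i j ∨ G.dir j i ∨ G.undir i j

/-- A semi-directed step from `i` to `j`: an undirected edge or a directed edge `i→j`. -/
def SStep (G : PDG V) (i j : V) : Prop := G.dir i j ∨ G.undir i j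

/-- Existence of a semi-directed cycle: `f 0, …, f m` with `f 0 = f m`, `m ≥ 2`,
each consecutive pair a semi-directed step, at least one step directed. -/
def HasSemiDirectedCycle (G : PDG V) : Prop :=
  ∃ (m : ℕ) (f : ℕ → V), 2 ≤ m ∧ f 0 = f m ∧
    (∀ i < m, G.SStep (f i) (f (i + 1))) ∧ (∃ i < m, G.dir (f i) (f (i + 1)))

/-- Strictly acyclic: no semi-directed cycle. -/
def StrictlyAcyclic (G : PDG V) : Prop := ¬ G.HasSemiDirectedCycle

/-- Joined by a path of undirected edges (possibly trivial). -/
def sameChain (G : PDG V) (i j : V) : Prop := Relation.ReflTransGen G.undir i j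

/-- The chain component of a vertex. -/
def chainComp (G : PDG V) (i : V) : Set V := {j | G.sameChain i j}

/-- Parents of a vertex set. -/
def Pa (G : PDG V) (D : Set V) : Set V := {i | ∃ d ∈ D, G.dir i d}

/-- Ancestors of a vertex set (directed path, possibly of length 0). -/
def An (G : PDG V) (D : Set V) : Set V := {i | ∃ d ∈ D, Relation.ReflTransGen G.dir i d}

/-- A DAG: only directed edges, and no directed cycles. -/
def IsDAG (G : PDG V) : Prop :=
  (∀ i j, ¬ G.undir i j) ∧ ∀ i, ¬ Relation.TransGen G.dir i i

/-- Unshielded collider `(i, k, j)`: `i→k ← j` with `i`, `j` distinct and non-adjacent. -/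
def UC (G : PDG V) (i k j : V) : Prop :=
  i ≠ j ∧ G.dir i k ∧ G.dir j k ∧ ¬ G.Adj i j

/-- `D ∈ [G]`: `D` is a DAG with the same skeleton as `G`, containing every directed edge
of `G`, all of whose unshielded colliders are unshielded colliders of `G`. -/
def InClass (D G : PDG V) : Prop :=
  D.IsDAG ∧ (∀ i j, D.Adj i j ↔ G.Adj i j) ∧ (∀ i j, G.dir i j → D.dir i j) ∧
    (∀ i k j, D.UC i k j → G.UC i k j)

/-- `C` is a nonempty set, connected by undirected edges within `C`, receiving a directed
edge from `I` and one from `J`. -/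
def ComplexCand (G : PDG V) (I : V) (C : Set V) (J : V) : Prop :=
  C.Nonempty ∧
  (∀ a ∈ C, ∀ b ∈ C,
    Relation.ReflTransGen (fun x y => G.undir x y ∧ x ∈ C ∧ y ∈ C) a b) ∧
  (∃ c ∈ C, G.dir I c) ∧ (∃ c ∈ C, G.dir J c)

/-- Minimal complex `(I, C, J)` of `G`. -/
def MinimalComplex (G : PDG V) (I : V) (C : Set V) (J : V) : Prop :=
  I ≠ J ∧ ¬ G.Adj I J ∧ (∀ a ∈ C, ∀ b ∈ C, G.sameChain a b) ∧
  G.ComplexCand I C J ∧ ∀ C' ⊂ C, ¬ G.ComplexCand I C' J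

/-- Remove all directed edges pointing into `S`. -/
def removeInto (G : PDG V) (S : Set V) : PDG V where
  dir i j := G.dir i j ∧ j ∉ S
  undir := G.undir
  undir_symm := G.undir_symm
  undir_irrefl := G.undir_irrefl
  dir_irrefl i h := G.dir_irrefl i h.1
  not_dir_dir i j h h' := G.not_dir_dir i j h.1 h'.1
  not_dir_undir i j h h' := G.not_dir_undir i j h.1 h'

/-- Induced subgraph on the vertex set `D` (kept on the same vertex type; edges
outside `D` are discarded). -/
def induce (G : PDG V) (D : Set V) : PDG V where
  dir i j := G.dir i j ∧ i ∈ D ∧ j ∈ D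
  undir i j := G.undir i j ∧ i ∈ D ∧ j ∈ D
  undir_symm i j h := ⟨G.undir_symm i j h.1, h.2.2, h.2.1⟩
  undir_irrefl i h := G.undir_irrefl i h.1
  dir_irrefl i h := G.dir_irrefl i h.1
  not_dir_dir i j h h' := G.not_dir_dir i j h.1 h'.1
  not_dir_undir i j h h' := G.not_dir_undir i j h.1 h'.1

/-- `G(↛X)`: `G` with every directed edge into `X ∩ An_G(Y)` removed. -/
def noInto (G : PDG V) (X Y : Set V) : PDG V := G.removeInto (X ∩ G.An Y)

/-- `RM(G; X, Y)`: the induced subgraph of `G(↛X)` on `An_{G(↛X)}(Y)`. -/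
def RM (G : PDG V) (X Y : Set V) : PDG V :=
  (G.noInto X Y).induce ((G.noInto X Y).An Y)

/-- There is a proper semi-directed path from `X` to `Y` starting with an undirected
edge: distinct vertices `f 0 ∈ X, …, f m ∈ Y`, only `f 0` in `X`, each consecutive pair a
semi-directed step, the first edge undirected. -/
def HasProperUndirStartPath (G : PDG V) (X Y : Set V) : Prop :=
  ∃ (m : ℕ) (f : ℕ → V), 1 ≤ m ∧
    (∀ i ≤ m, ∀ j ≤ m, f i = f j → i = j) ∧
    f 0 ∈ X ∧ f m ∈ Y ∧ (∀ i < m, G.SStep (f i) (f (i + 1))) ∧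
    (∀ i, 1 ≤ i → i ≤ m → f i ∉ X) ∧ G.undir (f 0) (f 1)

/-- Membership in the chain decomposition `CD_G(D)`: the nonempty intersections of `D`
with chain components of `G`. -/
def CDmem (G : PDG V) (D S : Set V) : Prop :=
  S.Nonempty ∧ ∃ i, S = D ∩ G.chainComp i

end PDG

noncomputable section Prob

open PDG

variable {V : Type} [Fintype V] [DecidableEq V] {𝒳 : V → Type} [∀ i, Fintype (𝒳 i)]
  [∀ i, Nonempty (𝒳 i)]

/-- Marginal `p_S(v_S)`: sum of `p` over configurations agreeing with `v` on `S`. -/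
def marginal (p : (∀ i, 𝒳 i) → ℝ) (S : Set V) (v : ∀ i, 𝒳 i) : ℝ :=
  ∑ w : ∀ i, 𝒳 i, if ∀ i ∈ S, w i = v i then p w else 0

/-- Conditional `p(v_A | v_S) = p_{A∪S}(v_{A∪S}) / p_S(v_S)`. -/
def condP (p : (∀ i, 𝒳 i) → ℝ) (A S : Set V) (v : ∀ i, 𝒳 i) : ℝ :=
  marginal p (A ∪ S) v / marginal p S v

/-- A strictly positive pmf. -/
def IsPositivePMF (p : (∀ i, 𝒳 i) → ℝ) : Prop :=
  (∀ v, 0 < p v) ∧ ∑ v : ∀ i, 𝒳 i, p v = 1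

/-- `p` factorizes according to the DAG `D`. -/
def FactorizesDAG (p : (∀ i, 𝒳 i) → ℝ) (D : PDG V) : Prop :=
  ∀ v, p v = ∏ i : V, condP p {i} (D.Pa {i}) v

/-- The (finitely many) chain components of `G`. -/
def chainComponents (G : PDG V) : Finset (Set V) :=
  Finset.univ.image (fun i => G.chainComp i)

/-- The outer chain-graph factorization `∏_τ p(v_τ | v_{Pa_G(τ)})` over chain
components `τ` of `G`. -/
def chainProd (G : PDG V) (p : (∀ i, 𝒳 i) → ℝ) (v : ∀ i, 𝒳 i) : ℝ :=
  ∏ τ ∈ chainComponents G, condP p τ (G.Pa τ) v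

/-- The product `∏_j p(v_{D_j} | v_{Pa_G(D_j)})` over the chain decomposition
`CD_G(D) = {D_1,…,D_k}` (empty intersections contribute a factor `1`). -/
def cdProd (G : PDG V) (p : (∀ i, 𝒳 i) → ℝ) (D : Set V) (v : ∀ i, 𝒳 i) : ℝ :=
  ∏ τ ∈ chainComponents G, condP p (D ∩ τ) (G.Pa (D ∩ τ)) v

/-- The identification formula (g-formula) of Perković's theorem:
`Σ_b ∏_j p(b_j | pa_G(B_j))` where `{B_1,…,B_k} = CD_G(An_{G_{V∖X}}(Y))`,
the sum running over configurations of `B = An_{G_{V∖X}}(Y) ∖ Y`, all other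
coordinates (in particular the intervened values on `X` and the values on `Y`)
being fixed by `v`. -/
def gFormula (G : PDG V) (p : (∀ i, 𝒳 i) → ℝ) (X Y : Set V) (v : ∀ i, 𝒳 i) : ℝ :=
  ∑ w : ∀ i, 𝒳 i,
    if ∀ i, i ∉ (G.induce Xᶜ).An Y \ Y → w i = v i then
      cdProd G p ((G.induce Xᶜ).An Y) w
    else 0

/-- The re-weighting formula `Σ_{v'} p(v) / ∏_j p(x_j | pa_G(X_j))`, where
`{X_1,…,X_m} = CD_G(X ∩ An_G(Y))` and the sum runs over configurations of
`V ∖ (X ∪ Y)`, the coordinates on `X ∪ Y` being fixed by `v`. -/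
def rwFormula (G : PDG V) (p : (∀ i, 𝒳 i) → ℝ) (X Y : Set V) (v : ∀ i, 𝒳 i) : ℝ :=
  ∑ w : ∀ i, 𝒳 i,
    if ∀ i ∈ X ∪ Y, w i = v i then p w / cdProd G p (X ∩ G.An Y) w else 0

/-- The `Y`-marginal of the truncated factorization of `p` with respect to the DAG `D`:
`Σ_{v_{V∖(X∪Y)}} ∏_{i ∈ V∖X} p(v_i | v_{Pa_D(i)})`, the coordinates on `X ∪ Y` being
fixed by `v`. -/
def truncMarg (D : PDG V) (p : (∀ i, 𝒳 i) → ℝ) (X Y : Set V) (v : ∀ i, 𝒳 i) : ℝ :=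
  ∑ w : ∀ i, 𝒳 i,
    if ∀ i ∈ X ∪ Y, w i = v i then
      ∏ i ∈ Finset.univ.filter (fun i => i ∉ X), condP p {i} (D.Pa {i}) w
    else 0

end Prob

/-!
By Chickering's theorem, Markov-equivalent DAGs are joined by a sequence of covered edge
reversals. Reversing a covered edge `x → y`, where `Pa(y) = Pa(x) ∪ {x}`, changes only the
factors at `x` and `y`, and both before and after the reversal their product is
`p(v_x, v_y | v_{Pa(x)})` by the chain rule.

For Chickering's theorem itself, among the edges of `D₁` reversed in `D₂` take one whose head
`y` has the fewest ancestors in `D₁`, and among those into `y` one whose tail `x` has the most;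
equal skeletons and unshielded colliders force `x → y` to be covered, and its reversal keeps
`D₁` acyclic, Markov equivalent to `D₂`, and closer to it.
-/

theorem Relation.TransGen.of_sup_edge {α : Type*} {r : α → α → Prop} {x y a b : α}
    (h : Relation.TransGen (fun i j => r i j ∨ (i = y ∧ j = x)) a b) :
    Relation.TransGen r a b ∨ (Relation.ReflTransGen r a y ∧ Relation.ReflTransGen r x b) := by
  induction h with
  | single h =>
    rcases h with h | ⟨rfl, rfl⟩
    exacts [Or.inl (.single h), Or.inr ⟨.refl, .refl⟩]
  | tail _ h ih =>
    rcases h with h | ⟨rfl, rfl⟩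
    · exact ih.imp (·.tail h) fun ⟨hay, hxc⟩ => ⟨hay, hxc.tail h⟩
    · exact Or.inr ⟨ih.elim (·.to_reflTransGen) And.left, .refl⟩

namespace PDG

variable {V : Type}

theorem ext {G H : PDG V} (hdir : ∀ i j, G.dir i j ↔ H.dir i j)
    (hundir : ∀ i j, G.undir i j ↔ H.undir i j) : G = H := by
  obtain ⟨d, u, _, _, _, _, _⟩ := G
  obtain ⟨d', u', _, _, _, _, _⟩ := H
  obtain rfl : d = d' := funext₂ fun i j => propext (hdir i j)
  obtain rfl : u = u' := funext₂ fun i j => propext (hundir i j)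
  rfl

theorem mem_pa_singleton {G : PDG V} {i z : V} : z ∈ G.Pa {i} ↔ G.dir z i := by
  simp [Pa]

theorem ne_of_dir {G : PDG V} {x y : V} (h : G.dir x y) : x ≠ y :=
  fun hxy => G.dir_irrefl y (hxy ▸ h)

theorem IsDAG.dir_or_dir_of_adj {G : PDG V} (hG : G.IsDAG) {i j : V} (h : G.Adj i j) :
    G.dir i j ∨ G.dir j i :=
  h.imp_right fun h => h.resolve_right (hG.1 i j)

theorem IsDAG.not_dir_of_dir_of_dir {G : PDG V} (hG : G.IsDAG) {a b c : V}
    (hab : G.dir a b) (hbc : G.dir b c) : ¬ G.dir c a :=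
  fun hca => hG.2 a (((Relation.TransGen.single hab).tail hbc).tail hca)

def IsCovered (G : PDG V) (x y : V) : Prop := ∀ z, G.dir z y ↔ z = x ∨ G.dir z x

def reverse (G : PDG V) (x y : V) (hxy : G.dir x y) : PDG V where
  dir i j := (G.dir i j ∧ ¬(i = x ∧ j = y)) ∨ (i = y ∧ j = x)
  undir := G.undir
  undir_symm := G.undir_symm
  undir_irrefl := G.undir_irrefl
  dir_irrefl := by
    rintro i (⟨h, -⟩ | ⟨rfl, rfl⟩)
    exacts [G.dir_irrefl i h, G.dir_irrefl i hxy]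
  not_dir_dir := by
    rintro i j (⟨h, hne⟩ | ⟨rfl, rfl⟩) (⟨h', hne'⟩ | ⟨h₁, h₂⟩)
    exacts [G.not_dir_dir i j h h', hne ⟨h₂, h₁⟩, hne' ⟨rfl, rfl⟩, ne_of_dir hxy h₂.symm]
  not_dir_undir := by
    rintro i j (⟨h, -⟩ | ⟨rfl, rfl⟩) h'
    exacts [G.not_dir_undir i j h h', G.not_dir_undir _ _ hxy (G.undir_symm _ _ h')]

section Reverse

variable {G : PDG V} {x y : V} {hxy : G.dir x y}

theorem adj_reverse_iff {i j : V} : (G.reverse x y hxy).Adj i j ↔ G.Adj i j := by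
  simp only [Adj, reverse]
  grind

theorem IsDAG.reverse (hG : G.IsDAG) (hcov : G.IsCovered x y) :
    (G.reverse x y hxy).IsDAG := by
  refine ⟨hG.1, fun i hi => ?_⟩
  rcases Relation.TransGen.of_sup_edge hi with hi | ⟨hiy, hxi⟩
  · exact hG.2 i (Relation.TransGen.mono (fun _ _ => And.left) _ _ hi)
  · -- the cycle yields a path `x ⇝ b → y` avoiding the edge `x → y`; coveredness gives `b → x`
    obtain hxy' | hxy' := Relation.reflTransGen_iff_eq_or_transGen.mp (hxi.trans hiy)
    · exact ne_of_dir hxy hxy'.symm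
    obtain ⟨b, hxb, hby, hbx⟩ := Relation.TransGen.tail'_iff.mp hxy'
    have hbx' : G.dir b x := ((hcov b).mp hby).resolve_left fun h => hbx ⟨h, rfl⟩
    exact hG.2 x (.tail' (Relation.ReflTransGen.mono (fun _ _ => And.left) _ _ hxb) hbx')

theorem mem_pa_reverse_singleton_of_ne {i : V} (hix : i ≠ x) (hiy : i ≠ y) :
    (G.reverse x y hxy).Pa {i} = G.Pa {i} := by
  ext z
  simp only [mem_pa_singleton, reverse]
  grind

theorem pa_reverse_singleton_left : (G.reverse x y hxy).Pa {x} = {y} ∪ G.Pa {x} := by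
  ext z
  simp only [mem_pa_singleton, reverse, Set.mem_union, Set.mem_singleton_iff]
  grind [ne_of_dir hxy]

theorem pa_reverse_singleton_right (hcov : G.IsCovered x y) :
    (G.reverse x y hxy).Pa {y} = G.Pa {x} := by
  ext z
  simp only [mem_pa_singleton, reverse]
  grind [ne_of_dir hxy, IsCovered, G.dir_irrefl]

theorem IsCovered.pa_singleton_right (hcov : G.IsCovered x y) :
    G.Pa {y} = {x} ∪ G.Pa {x} := by
  ext z
  simpa [mem_pa_singleton] using hcov z

theorem uc_reverse_iff (hcov : G.IsCovered x y) {i k j : V} :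
    (G.reverse x y hxy).UC i k j ↔ G.UC i k j := by
  -- a collider using the edge `x — y` would need a parent of `y` other than `x` that is not
  -- adjacent to `x`, which coveredness rules out
  simp only [UC, adj_reverse_iff]
  have hi := hcov i
  have hj := hcov j
  simp only [reverse, Adj] at *
  grind [ne_of_dir hxy]

end Reverse

def CoveredReversal (G H : PDG V) : Prop :=
  ∃ x y, ∃ hxy : G.dir x y, G.IsCovered x y ∧ H = G.reverse x y hxy

section Chickering

variable [Fintype V] {D₁ D₂ : PDG V}

noncomputable def ancestorCount (G : PDG V) (i : V) : ℕ :=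
  (Finset.univ.filter fun j => Relation.TransGen G.dir j i).card

theorem ancestorCount_lt_of_dir {G : PDG V} (hac : ∀ i, ¬ Relation.TransGen G.dir i i)
    {i j : V} (h : G.dir i j) : G.ancestorCount i < G.ancestorCount j := by
  refine Finset.card_lt_card ⟨fun k hk => ?_, fun hsub => hac i ?_⟩
  · simp only [Finset.mem_filter, Finset.mem_univ, true_and] at hk ⊢
    exact hk.tail h
  · simpa using hsub (by simpa using Relation.TransGen.single h)

noncomputable def reversedEdges (D₁ D₂ : PDG V) : Finset (V × V) :=
  Finset.univ.filter fun e => D₁.dir e.1 e.2 ∧ D₂.dir e.2 e.1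

theorem mem_reversedEdges {e : V × V} :
    e ∈ reversedEdges D₁ D₂ ↔ D₁.dir e.1 e.2 ∧ D₂.dir e.2 e.1 := by
  simp [reversedEdges]

theorem card_reversedEdges_reverse_lt {x y : V} (hxy : D₁.dir x y) (hyx : D₂.dir y x) :
    (reversedEdges (D₁.reverse x y hxy) D₂).card < (reversedEdges D₁ D₂).card := by
  refine (Finset.card_le_card fun e he => ?_).trans_lt
    (Finset.card_erase_lt_of_mem ((mem_reversedEdges (e := (x, y))).mpr ⟨hxy, hyx⟩))
  obtain ⟨a, b⟩ := e
  simp only [Finset.mem_erase, mem_reversedEdges, reverse, ne_eq, Prod.mk.injEq] at he ⊢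
  rcases he with ⟨⟨hab, hne⟩ | ⟨rfl, rfl⟩, hba⟩
  · exact ⟨hne, hab, hba⟩
  · exact absurd hba (D₂.not_dir_dir _ _ hyx)

theorem eq_of_reversedEdges_eq_empty (h₁ : D₁.IsDAG) (h₂ : D₂.IsDAG)
    (hskel : ∀ i j, D₁.Adj i j ↔ D₂.Adj i j) (h : reversedEdges D₁ D₂ = ∅) : D₁ = D₂ := by
  have hnot : ∀ a b, D₁.dir a b → ¬ D₂.dir b a := fun a b hab hba =>
    Finset.notMem_empty (a, b) (h ▸ mem_reversedEdges.mpr ⟨hab, hba⟩)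
  refine ext (fun i j => ⟨fun hij => ?_, fun hij => ?_⟩)
    fun i j => iff_of_false (h₁.1 i j) (h₂.1 i j)
  · exact (h₂.dir_or_dir_of_adj ((hskel i j).mp (.inl hij))).resolve_right (hnot i j hij)
  · exact (h₁.dir_or_dir_of_adj ((hskel i j).mpr (.inl hij))).resolve_right
      fun hji => hnot j i hji hij

theorem dir_of_dir_head_of_extremal (h₁ : D₁.IsDAG) (h₂ : D₂.IsDAG)
    (hskel : ∀ i j, D₁.Adj i j ↔ D₂.Adj i j) (huc : ∀ i k j, D₁.UC i k j → D₂.UC i k j)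
    {x y : V} (hxy : D₁.dir x y) (hyx : D₂.dir y x)
    (hmin : ∀ e ∈ reversedEdges D₁ D₂, D₁.ancestorCount y ≤ D₁.ancestorCount e.2)
    (hmax : ∀ e ∈ reversedEdges D₁ D₂, e.2 = y → D₁.ancestorCount e.1 ≤ D₁.ancestorCount x)
    {z : V} (hzy : D₁.dir z y) (hzx : z ≠ x) : D₁.dir z x := by
  have hadj : D₁.Adj z x := by
    by_contra hna
    exact D₂.not_dir_dir y x hyx (huc z y x ⟨hzx, hzy, hxy, hna⟩).2.2.1
  refine (h₁.dir_or_dir_of_adj hadj).resolve_right fun hxz => ?_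
  have hzy₂ : D₂.dir z y := by
    refine (h₂.dir_or_dir_of_adj ((hskel z y).mp (.inl hzy))).resolve_right fun hyz => ?_
    exact (ancestorCount_lt_of_dir h₁.2 hxz).not_ge
      (hmax (z, y) (mem_reversedEdges.mpr ⟨hzy, hyz⟩) rfl)
  rcases h₂.dir_or_dir_of_adj ((hskel x z).mp (.inl hxz)) with hxz₂ | hzx₂
  · exact h₂.not_dir_of_dir_of_dir hyx hxz₂ hzy₂
  · exact (ancestorCount_lt_of_dir h₁.2 hzy).not_ge
      (hmin (x, z) (mem_reversedEdges.mpr ⟨hxz, hzx₂⟩))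

theorem dir_of_dir_tail_of_extremal (h₁ : D₁.IsDAG) (h₂ : D₂.IsDAG)
    (hskel : ∀ i j, D₁.Adj i j ↔ D₂.Adj i j) (huc : ∀ i k j, D₂.UC i k j → D₁.UC i k j)
    {x y : V} (hxy : D₁.dir x y) (hyx : D₂.dir y x)
    (hmin : ∀ e ∈ reversedEdges D₁ D₂, D₁.ancestorCount y ≤ D₁.ancestorCount e.2)
    {z : V} (hzx : D₁.dir z x) : D₁.dir z y := by
  have hzx₂ : D₂.dir z x := by
    refine (h₂.dir_or_dir_of_adj ((hskel z x).mp (.inl hzx))).resolve_right fun hxz => ?_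
    exact (ancestorCount_lt_of_dir h₁.2 hxy).not_ge
      (hmin (z, x) (mem_reversedEdges.mpr ⟨hzx, hxz⟩))
  by_contra hzy
  have hna : ¬ D₁.Adj z y := by
    rintro (h | h | h)
    exacts [hzy h, h₁.not_dir_of_dir_of_dir hzx hxy h, h₁.1 z y h]
  have hzy' : z ≠ y := fun h => D₁.not_dir_dir x y hxy (h ▸ hzx)
  exact D₁.not_dir_dir x y hxy
    (huc z x y ⟨hzy', hzx₂, hyx, fun h => hna ((hskel z y).mpr h)⟩).2.2.1

theorem exists_isCovered_mem_reversedEdges (h₁ : D₁.IsDAG) (h₂ : D₂.IsDAG)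
    (hskel : ∀ i j, D₁.Adj i j ↔ D₂.Adj i j) (huc : ∀ i k j, D₁.UC i k j ↔ D₂.UC i k j)
    (hne : (reversedEdges D₁ D₂).Nonempty) :
    ∃ x y, D₁.dir x y ∧ D₂.dir y x ∧ D₁.IsCovered x y := by
  -- Chickering's choice: `y` a lowest head of a reversed edge, then `x` a highest tail into `y`.
  obtain ⟨⟨_, y⟩, hy, hmin⟩ :=
    (reversedEdges D₁ D₂).exists_min_image (fun e => D₁.ancestorCount e.2) hne
  obtain ⟨⟨x, y'⟩, hx, hmax⟩ :=
    ((reversedEdges D₁ D₂).filter fun e => e.2 = y).exists_max_image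
      (fun e => D₁.ancestorCount e.1) (Finset.filter_nonempty_iff.mpr ⟨_, hy, rfl⟩)
  obtain ⟨hxmem, rfl : y' = y⟩ := Finset.mem_filter.mp hx
  obtain ⟨hxy, hyx⟩ := mem_reversedEdges.mp hxmem
  refine ⟨x, _, hxy, hyx, fun z => ⟨fun hzy => ?_, ?_⟩⟩
  · exact or_iff_not_imp_left.mpr (dir_of_dir_head_of_extremal h₁ h₂ hskel (huc · · · |>.mp)
      hxy hyx hmin (fun e he hey => hmax e (Finset.mem_filter.mpr ⟨he, hey⟩)) hzy)
  · rintro (rfl | hzx)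
    exacts [hxy, dir_of_dir_tail_of_extremal h₁ h₂ hskel (huc · · · |>.mpr) hxy hyx hmin hzx]

theorem reflTransGen_coveredReversal (h₁ : D₁.IsDAG) (h₂ : D₂.IsDAG)
    (hskel : ∀ i j, D₁.Adj i j ↔ D₂.Adj i j) (huc : ∀ i k j, D₁.UC i k j ↔ D₂.UC i k j) :
    Relation.ReflTransGen CoveredReversal D₁ D₂ := by
  induction hn : (reversedEdges D₁ D₂).card using Nat.strong_induction_on generalizing D₁ with
  | _ n ih =>
  obtain h | hne := (reversedEdges D₁ D₂).eq_empty_or_nonempty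
  · rw [eq_of_reversedEdges_eq_empty h₁ h₂ hskel h]
  obtain ⟨x, y, hxy, hyx, hcov⟩ := exists_isCovered_mem_reversedEdges h₁ h₂ hskel huc hne
  refine .head ⟨x, y, hxy, hcov, rfl⟩ (ih _ (hn ▸ card_reversedEdges_reverse_lt hxy hyx)
    (h₁.reverse hcov) (fun i j => adj_reverse_iff.trans (hskel i j))
    (fun i k j => (uc_reverse_iff hcov).trans (huc i k j)) rfl)

end Chickering

end PDG

theorem Fintype.prod_congr_pair {ι M : Type*} [Fintype ι] [DecidableEq ι] [CommMonoid M]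
    {f g : ι → M} {a b : ι} (hab : a ≠ b) (hpair : f a * f b = g a * g b)
    (hrest : ∀ i, i ≠ a → i ≠ b → f i = g i) : ∏ i, f i = ∏ i, g i := by
  rw [← Finset.prod_sdiff (Finset.subset_univ {a, b}), Finset.prod_pair hab,
    ← Finset.prod_sdiff (Finset.subset_univ {a, b}), Finset.prod_pair hab, hpair]
  refine congrArg (· * _) (Finset.prod_congr rfl fun i hi => ?_)
  simp only [Finset.mem_sdiff, Finset.mem_univ, Finset.mem_insert, Finset.mem_singleton,
    true_and, not_or] at hi
  exact hrest i hi.1 hi.2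

section Factorization

open PDG

variable {V : Type} [Fintype V] [DecidableEq V] {𝒳 : V → Type} [∀ i, Fintype (𝒳 i)]
  {p : (∀ i, 𝒳 i) → ℝ}

theorem marginal_pos (hp : ∀ w, 0 < p w) (S : Set V) (v : ∀ i, 𝒳 i) : 0 < marginal p S v :=
  Finset.sum_pos' (fun w _ => by split_ifs <;> simp [(hp w).le])
    ⟨v, Finset.mem_univ v, by simp [hp v]⟩

theorem condP_mul_condP_comm (hp : ∀ w, 0 < p w) (x y : V) (S : Set V) (v : ∀ i, 𝒳 i) :
    condP p {x} S v * condP p {y} ({x} ∪ S) v = condP p {y} S v * condP p {x} ({y} ∪ S) v := by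
  have hxy : ({y} : Set V) ∪ ({x} ∪ S) = {x} ∪ ({y} ∪ S) := Set.union_left_comm _ _ _
  have h₁ := (marginal_pos hp S v).ne'
  have h₂ := (marginal_pos hp ({x} ∪ S) v).ne'
  have h₃ := (marginal_pos hp ({y} ∪ S) v).ne'
  simp only [condP, hxy]
  field_simp

theorem prod_condP_pa_reverse (hp : ∀ w, 0 < p w) {G : PDG V} {x y : V} (hxy : G.dir x y)
    (hcov : G.IsCovered x y) (v : ∀ i, 𝒳 i) :
    ∏ i, condP p {i} ((G.reverse x y hxy).Pa {i}) v = ∏ i, condP p {i} (G.Pa {i}) v := by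
  refine Fintype.prod_congr_pair (ne_of_dir hxy) ?_ fun i hix hiy => by
    rw [mem_pa_reverse_singleton_of_ne hix hiy]
  rw [pa_reverse_singleton_left, pa_reverse_singleton_right hcov, hcov.pa_singleton_right,
    mul_comm]
  exact (condP_mul_condP_comm hp x y _ v).symm

theorem prod_condP_pa_eq_of_reflTransGen (hp : ∀ w, 0 < p w) {G H : PDG V}
    (h : Relation.ReflTransGen CoveredReversal G H) (v : ∀ i, 𝒳 i) :
    ∏ i, condP p {i} (G.Pa {i}) v = ∏ i, condP p {i} (H.Pa {i}) v := by
  induction h with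
  | refl => rfl
  | tail _ hstep ih =>
    obtain ⟨x, y, hxy, hcov, rfl⟩ := hstep
    exact ih.trans (prod_condP_pa_reverse hp hxy hcov v).symm

end Factorization

theorem stmt9_general {V : Type} [Fintype V] [DecidableEq V]
    (D₁ D₂ : PDG V) (h₁ : D₁.IsDAG) (h₂ : D₂.IsDAG)
    (hskel : ∀ i j : V, D₁.Adj i j ↔ D₂.Adj i j)
    (huc : ∀ i k j : V, D₁.UC i k j ↔ D₂.UC i k j)
    (𝒳 : V → Type) [∀ i, Fintype (𝒳 i)]
    (p : (∀ i, 𝒳 i) → ℝ) (hp : IsPositivePMF p) :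
    ∀ v : ∀ i, 𝒳 i,
      ∏ i : V, condP p {i} (D₁.Pa {i}) v = ∏ i : V, condP p {i} (D₂.Pa {i}) v :=
  prod_condP_pa_eq_of_reflTransGen hp.1 (PDG.reflTransGen_coveredReversal h₁ h₂ hskel huc)

/-- Markov-equivalent DAGs (same skeleton, same unshielded colliders) give
the same DAG factorization of every strictly positive pmf at every configuration. -/
theorem stmt9 {V : Type} [Fintype V] [DecidableEq V]
    (D₁ D₂ : PDG V) (h₁ : D₁.IsDAG) (h₂ : D₂.IsDAG)
    (hskel : ∀ i j : V, D₁.Adj i j ↔ D₂.Adj i j)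
    (huc : ∀ i k j : V, D₁.UC i k j ↔ D₂.UC i k j)
    (𝒳 : V → Type) [∀ i, Fintype (𝒳 i)] [∀ i, Nonempty (𝒳 i)]
    (p : (∀ i, 𝒳 i) → ℝ) (hp : IsPositivePMF p) :
    ∀ v : ∀ i, 𝒳 i,
      ∏ i : V, condP p {i} (D₁.Pa {i}) v = ∏ i : V, condP p {i} (D₂.Pa {i}) v :=
  stmt9_general D₁ D₂ h₁ h₂ hskel huc 𝒳 p hp
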